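/- For any infinite connected graph G with bounded degrees and any n, the deterministic inequalities R_n ≤ U_n ≤ R_n + ∑_{x ∈ ∂R_n} |C_x| hold, where ∂R_n is the set of x in the trace with some neighbor outside the trace; moreover (p/Δ_G) E^{P^o}[L_n] ≤ E[U_n] − E^{P^o}[R_n] ≤ (sup_x E[|C_x|]) E^{P^o}[L_n]. -/

import Mathlib

/-!
A vertex of `⋃ᵢ C_{S_i}` outside the trace is joined to the trace by an open path; the last
vertex of that path inside the trace lies in `∂R_n`, so `U_n ≤ R_n + ∑_{x ∈ ∂R_n} |C_x|`.
Conversely every vertex `y` of the exterior boundary is adjacent to some trace vertex, and that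
edge is open with probability `p`, which adds `p |∂^e R_n|` to `E[U_n]`; each vertex of `∂R_n`
is adjacent to a vertex of `∂^e R_n`, whence `L_n ≤ Δ |∂^e R_n|`. The bounds in expectation
follow by averaging these per-path bounds over the walk.
-/

open MeasureTheory
open scoped ENNReal

namespace PaperUnion

variable {V : Type*}

/-- The subgraph of `G` consisting of the open edges of the percolation
configuration `ω`. -/
def openGraph (G : SimpleGraph V) (ω : Sym2 V → Bool) : SimpleGraph V where
  Adj x y := G.Adj x y ∧ ω s(x, y) = true
  symm := by
    constructor
    rintro x y ⟨h1, h2⟩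
    exact ⟨h1.symm, by rwa [Sym2.eq_swap]⟩
  loopless := by constructor; rintro x ⟨h, -⟩; exact G.irrefl h

/-- The open cluster of the vertex `x` in the configuration `ω`. -/
def cluster (G : SimpleGraph V) (ω : Sym2 V → Bool) (x : V) : Set V :=
  {y | (openGraph G ω).Reachable x y}

/-- `|C_x|`, the number of vertices of the open cluster of `x`. -/
noncomputable def clusterSize (G : SimpleGraph V) (ω : Sym2 V → Bool) (x : V) : ℝ≥0∞ :=
  (cluster G ω x).encard

/-- `μ` is Bernoulli(p) bond percolation on `G`: a probability measure under which the
states of distinct edges are independent and each edge is open with probability `p`. -/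
def IsBernoulli (G : SimpleGraph V) (p : ℝ≥0∞) (μ : Measure (Sym2 V → Bool)) : Prop :=
  IsProbabilityMeasure μ ∧
    ∀ F : Finset (Sym2 V), (F : Set (Sym2 V)) ⊆ G.edgeSet →
      ∀ b : Sym2 V → Bool,
        μ {ω | ∀ e ∈ F, ω e = b e} = ∏ e ∈ F, (if b e then p else 1 - p)

open Classical in
/-- The probability that the simple random walk started at `x` follows the
finite path `s`. -/
noncomputable def pathProb (G : SimpleGraph V) [G.LocallyFinite] (x : V) {n : ℕ}
    (s : Fin (n + 1) → V) : ℝ≥0∞ :=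
  (if s 0 = x then 1 else 0) *
    ∏ i : Fin n,
      if G.Adj (s i.castSucc) (s i.succ) then ((G.degree (s i.castSucc) : ℝ≥0∞))⁻¹ else 0

/-- `P^x(E)` for an event `E` depending on the first `n+1` positions of the simple
random walk. -/
noncomputable def walkProb (G : SimpleGraph V) [G.LocallyFinite] (x : V) (n : ℕ)
    (E : (Fin (n + 1) → V) → Prop) : ℝ≥0∞ :=
  ∑' s : Fin (n + 1) → V, {t : Fin (n + 1) → V | E t}.indicator (fun t => pathProb G x t) s

/-- `P^x(T_A > n)`, where `T_A = inf {m ≥ 1 : S_m ∈ A}`. -/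
noncomputable def probAvoid (G : SimpleGraph V) [G.LocallyFinite] (x : V) (A : Set V)
    (n : ℕ) : ℝ≥0∞ :=
  walkProb G x n (fun s => ∀ m : Fin (n + 1), 0 < (m : ℕ) → s m ∉ A)

/-- `P^x(T_A = ∞)`. -/
noncomputable def escapeProb (G : SimpleGraph V) [G.LocallyFinite] (x : V) (A : Set V) : ℝ≥0∞ :=
  ⨅ n : ℕ, probAvoid G x A n

/-- `P^x(k < T_A < ∞)`. -/
noncomputable def probHitAfter (G : SimpleGraph V) [G.LocallyFinite] (x : V) (A : Set V)
    (k : ℕ) : ℝ≥0∞ :=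
  probAvoid G x A k - escapeProb G x A

def IsVertexTransitive (G : SimpleGraph V) : Prop :=
  ∀ x y : V, ∃ φ : G ≃g G, φ x = y

def Transient (G : SimpleGraph V) [G.LocallyFinite] : Prop :=
  ∀ x : V, 0 < escapeProb G x {x}

def Recurrent (G : SimpleGraph V) [G.LocallyFinite] : Prop :=
  ∀ x : V, escapeProb G x {x} = 0

/-- The trace `{S_0, …, S_n}` of a finite path. -/
def trace [DecidableEq V] {n : ℕ} (s : Fin (n + 1) → V) : Finset V :=
  Finset.image s Finset.univ

/-- `R_n`, the number of vertices visited by the path. -/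
def rangeSize [DecidableEq V] {n : ℕ} (s : Fin (n + 1) → V) : ℕ :=
  (trace s).card

/-- The inner boundary `∂R_n` of the trace: the visited vertices having a
neighbour outside the trace. -/
def innerBoundary [DecidableEq V] (G : SimpleGraph V) {n : ℕ} (s : Fin (n + 1) → V) : Set V :=
  {x | x ∈ trace s ∧ ∃ y, G.Adj x y ∧ y ∉ trace s}

/-- `L_n = |∂R_n|`. -/
noncomputable def boundarySize [DecidableEq V] (G : SimpleGraph V) {n : ℕ}
    (s : Fin (n + 1) → V) : ℕ :=
  (innerBoundary G s).ncard

/-- `E^{P^x}[R_n]`. -/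
noncomputable def expRange [DecidableEq V] (G : SimpleGraph V) [G.LocallyFinite] (x : V)
    (n : ℕ) : ℝ≥0∞ :=
  ∑' s : Fin (n + 1) → V, pathProb G x s * (rangeSize s : ℝ≥0∞)

/-- `E^{P^x}[L_n]`. -/
noncomputable def expBoundary [DecidableEq V] (G : SimpleGraph V) [G.LocallyFinite] (x : V)
    (n : ℕ) : ℝ≥0∞ :=
  ∑' s : Fin (n + 1) → V, pathProb G x s * (boundarySize G s : ℝ≥0∞)

/-- `E[U_n]` where `U_n = |⋃_{i ≤ n} C_{S_i}|`, the expectation being taken with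
respect to the product of the walk measure started at `x` and the percolation
measure `μ`. -/
noncomputable def expUnion (G : SimpleGraph V) [G.LocallyFinite]
    (μ : Measure (Sym2 V → Bool)) (x : V) (n : ℕ) : ℝ≥0∞ :=
  ∑' s : Fin (n + 1) → V, pathProb G x s * ∫⁻ ω, (⋃ i, cluster G ω (s i)).encard ∂μ

/-- `c_p = E[|C_o| ⬝ P^o(T_{C_o} = ∞)]`. -/
noncomputable def cP (G : SimpleGraph V) [G.LocallyFinite] (μ : Measure (Sym2 V → Bool))
    (o : V) : ℝ≥0∞ :=
  ∫⁻ ω, clusterSize G ω o * escapeProb G o (cluster G ω o) ∂μ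

section Cluster

open SimpleGraph

variable {G : SimpleGraph V} {ω : Sym2 V → Bool}

lemma openGraph_le : openGraph G ω ≤ G := fun _ _ h => h.1

lemma mem_edgeSet_openGraph {e : Sym2 V} :
    e ∈ (openGraph G ω).edgeSet ↔ e ∈ G.edgeSet ∧ ω e = true := by
  induction e using Sym2.ind with
  | _ x y => exact Iff.rfl

lemma mem_cluster_iff {x y : V} :
    y ∈ cluster G ω x ↔ ∃ w : G.Walk x y, ∀ e ∈ w.edges, ω e = true := by
  constructor
  · rintro ⟨w⟩
    refine ⟨w.mapLe openGraph_le, fun e he => ?_⟩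
    rw [Walk.edges_mapLe_eq_edges] at he
    exact (mem_edgeSet_openGraph.1 (w.edges_subset_edgeSet he)).2
  · rintro ⟨w, hw⟩
    exact ⟨w.transfer _ fun e he => mem_edgeSet_openGraph.2 ⟨w.edges_subset_edgeSet he, hw e he⟩⟩

lemma reachable_of_mem_cluster {x y : V} (h : y ∈ cluster G ω x) : G.Reachable x y :=
  Reachable.mono openGraph_le h

instance [G.LocallyFinite] (x y : V) : Countable (G.Walk x y) := by
  classical
  exact Function.Surjective.countable
    (f := fun q : Σ n : ℕ, {w : G.Walk x y // w.length = n} => q.2.1)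
    fun w => ⟨⟨w.length, w, rfl⟩, rfl⟩

lemma finite_setOf_exists_walk_length [G.LocallyFinite] (x : V) (n : ℕ) :
    {y | ∃ w : G.Walk x y, w.length = n}.Finite := by
  induction n generalizing x with
  | zero =>
    refine (Set.finite_singleton x).subset ?_
    rintro y ⟨w, hw⟩
    cases w with
    | nil => rfl
    | cons => simp at hw
  | succ n ih =>
    refine ((G.neighborSet x).toFinite.biUnion fun u _ => ih u).subset ?_
    rintro y ⟨w, hw⟩
    cases w with
    | nil => simp at hw
    | cons h w => exact Set.mem_biUnion h ⟨w, by simpa using hw⟩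

lemma countable_setOf_reachable [G.LocallyFinite] (x : V) :
    {y | G.Reachable x y}.Countable := by
  refine (Set.countable_iUnion fun n =>
    (finite_setOf_exists_walk_length (G := G) x n).countable).mono ?_
  rintro y ⟨w⟩
  exact Set.mem_iUnion.2 ⟨w.length, w, rfl⟩

end Cluster

section Measurability

variable {G : SimpleGraph V} [G.LocallyFinite]

lemma measurableSet_edge_open (e : Sym2 V) : MeasurableSet {ω : Sym2 V → Bool | ω e = true} :=
  measurableSet_eq_fun (measurable_pi_apply e) measurable_const

lemma measurableSet_mem_cluster (x y : V) : MeasurableSet {ω | y ∈ cluster G ω x} := by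
  simp_rw [mem_cluster_iff, Set.ofPred_exists, Set.ofPred_forall]
  exact MeasurableSet.iUnion fun w => MeasurableSet.biInter w.edges.finite_toSet.countable
    fun e _ => measurableSet_edge_open e

lemma measurable_clusterSize (x : V) : Measurable fun ω => clusterSize G ω x := by
  set R := {y | G.Reachable x y}
  have := (countable_setOf_reachable (G := G) x).to_subtype
  have hsum : ∀ ω, clusterSize G ω x =
      ∑' y : R, (cluster G ω x).indicator (fun _ => (1 : ℝ≥0∞)) (y : V) := by
    intro ω
    have hsupp : ((cluster G ω x).indicator fun _ => (1 : ℝ≥0∞)).support ⊆ R :=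
      Set.support_indicator_subset.trans fun y hy => reachable_of_mem_cluster hy
    rw [tsum_subtype_eq_of_support_subset hsupp, ← tsum_subtype, ENNReal.tsum_set_one]
    rfl
  simp_rw [hsum]
  exact Measurable.tsum fun y =>
    measurable_const.indicator (measurableSet_mem_cluster x y)

end Measurability

section Boundary

open scoped Finset

variable (G : SimpleGraph V)

open Classical in
noncomputable def innerVertexBoundary (A : Finset V) : Finset V :=
  {x ∈ A | ∃ y, G.Adj x y ∧ y ∉ A}

def outerVertexBoundary [DecidableEq V] [G.LocallyFinite] (A : Finset V) : Finset V :=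
  {y ∈ A.biUnion fun x => G.neighborFinset x | y ∉ A}

variable {G}

lemma mem_innerVertexBoundary {A : Finset V} {x : V} :
    x ∈ innerVertexBoundary G A ↔ x ∈ A ∧ ∃ y, G.Adj x y ∧ y ∉ A := by
  simp [innerVertexBoundary]

lemma mem_outerVertexBoundary [DecidableEq V] [G.LocallyFinite] {A : Finset V} {y : V} :
    y ∈ outerVertexBoundary G A ↔ y ∉ A ∧ ∃ x ∈ A, G.Adj x y := by
  simp [outerVertexBoundary, and_comm]

lemma card_innerVertexBoundary_le [DecidableEq V] [G.LocallyFinite] {Δ : ℕ} (hΔ : ∀ x, G.degree x ≤ Δ)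
    (A : Finset V) : #(innerVertexBoundary G A) ≤ Δ * #(outerVertexBoundary G A) :=
  calc #(innerVertexBoundary G A)
      ≤ #((outerVertexBoundary G A).biUnion fun y => G.neighborFinset y) := by
        refine Finset.card_le_card fun x hx => ?_
        obtain ⟨hxA, y, hxy, hyA⟩ := mem_innerVertexBoundary.1 hx
        exact Finset.mem_biUnion.2
          ⟨y, mem_outerVertexBoundary.2 ⟨hyA, x, hxA, hxy⟩, (G.mem_neighborFinset _ _).2 hxy.symm⟩
    _ ≤ ∑ y ∈ outerVertexBoundary G A, G.degree y := Finset.card_biUnion_le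
    _ ≤ Δ * #(outerVertexBoundary G A) := by
        rw [mul_comm, ← smul_eq_mul]
        exact Finset.sum_le_card_nsmul _ _ _ fun y _ => hΔ y

end Boundary

section Sandwich

open scoped Finset

variable {G : SimpleGraph V} {ω : Sym2 V → Bool}

lemma subset_biUnion_cluster (A : Finset V) : (A : Set V) ⊆ ⋃ x ∈ A, cluster G ω x :=
  fun x hx => Set.mem_biUnion hx (SimpleGraph.Reachable.refl x)

lemma exists_mem_innerVertexBoundary_of_walk {A : Finset V} {a c : V}
    (w : (openGraph G ω).Walk a c) (ha : a ∈ A) (hc : c ∉ A) :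
    ∃ x ∈ innerVertexBoundary G A, c ∈ cluster G ω x := by
  induction w with
  | nil => exact absurd ha hc
  | @cons a b c h w ih =>
    by_cases hb : b ∈ A
    · exact ih hb hc
    · exact ⟨a, mem_innerVertexBoundary.2 ⟨ha, b, h.1, hb⟩, (SimpleGraph.Walk.cons h w).reachable⟩

lemma biUnion_cluster_subset (A : Finset V) :
    ⋃ x ∈ A, cluster G ω x ⊆ A ∪ ⋃ x ∈ innerVertexBoundary G A, cluster G ω x := by
  intro z hz
  obtain ⟨a, ha, ⟨w⟩⟩ := Set.mem_iUnion₂.1 hz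
  by_cases hzA : z ∈ A
  · exact Or.inl hzA
  · obtain ⟨x, hx, hzx⟩ := exists_mem_innerVertexBoundary_of_walk w ha hzA
    exact Or.inr (Set.mem_biUnion hx hzx)

lemma card_le_encard_biUnion_cluster (A : Finset V) :
    (#A : ℝ≥0∞) ≤ (⋃ x ∈ A, cluster G ω x).encard := by
  simpa using ENat.toENNReal_le.2 (Set.encard_mono (subset_biUnion_cluster (ω := ω) A))

lemma encard_biUnion_cluster_le (A : Finset V) :
    ((⋃ x ∈ A, cluster G ω x).encard : ℝ≥0∞) ≤
      #A + ∑ x ∈ innerVertexBoundary G A, clusterSize G ω x := by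
  have h : (⋃ x ∈ A, cluster G ω x).encard ≤
      #A + ∑ x ∈ innerVertexBoundary G A, (cluster G ω x).encard :=
    calc (⋃ x ∈ A, cluster G ω x).encard
        ≤ (A : Set V).encard + (⋃ x ∈ innerVertexBoundary G A, cluster G ω x).encard :=
          (Set.encard_mono (biUnion_cluster_subset A)).trans (Set.encard_union_le _ _)
      _ ≤ #A + ∑ x ∈ innerVertexBoundary G A, (cluster G ω x).encard := by
          rw [Set.encard_coe_eq_coe_finsetCard]
          gcongr
          exact Finset.set_encard_biUnion_le _ _
  have hsum := map_sum ENat.toENNRealRingHom (fun x => (cluster G ω x).encard)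
    (innerVertexBoundary G A)
  simp only [ENat.toENNRealRingHom_apply] at hsum
  simpa [clusterSize, hsum] using ENat.toENNReal_le.2 h

end Sandwich

section Expectation

open scoped Finset

variable {G : SimpleGraph V} {p : ℝ≥0∞} {μ : Measure (Sym2 V → Bool)}

lemma IsBernoulli.measure_edge_open (hμ : IsBernoulli G p μ) {e : Sym2 V} (he : e ∈ G.edgeSet) :
    μ {ω | ω e = true} = p := by
  simpa using hμ.2 {e} (by simpa using he) fun _ => true

lemma card_add_sum_indicator_le_encard_biUnion_cluster [DecidableEq V] [G.LocallyFinite]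
    (A : Finset V) {a : V → V} (ha : ∀ y ∈ outerVertexBoundary G A, a y ∈ A ∧ G.Adj (a y) y)
    (ω : Sym2 V → Bool) :
    (#A : ℝ≥0∞) + ∑ y ∈ outerVertexBoundary G A, {η | η s(a y, y) = true}.indicator 1 ω ≤
      (⋃ x ∈ A, cluster G ω x).encard := by
  set B := {y ∈ outerVertexBoundary G A | ω s(a y, y) = true}
  have hdisj : Disjoint A B := Finset.disjoint_left.2 fun y hyA hyB =>
    (mem_outerVertexBoundary.1 (Finset.mem_filter.1 hyB).1).1 hyA
  have hsub : ((A ∪ B : Finset V) : Set V) ⊆ ⋃ x ∈ A, cluster G ω x := by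
    intro y hy
    rcases Finset.mem_union.1 hy with hyA | hyB
    · exact subset_biUnion_cluster A hyA
    · obtain ⟨hy, hopen⟩ := Finset.mem_filter.1 hyB
      exact Set.mem_biUnion (ha y hy).1 (SimpleGraph.Adj.reachable ⟨(ha y hy).2, hopen⟩)
  have hcard := ENat.toENNReal_le.2 (Set.encard_mono hsub)
  rw [Set.encard_coe_eq_coe_finsetCard, Finset.card_union_of_disjoint hdisj] at hcard
  refine le_of_eq_of_le ?_ hcard
  simp [B, Set.indicator_apply, Finset.sum_boole]

lemma card_add_mul_card_outerVertexBoundary_le_lintegral [DecidableEq V] [G.LocallyFinite]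
    (hμ : IsBernoulli G p μ) (A : Finset V) :
    (#A : ℝ≥0∞) + p * #(outerVertexBoundary G A) ≤
      ∫⁻ ω, (⋃ x ∈ A, cluster G ω x).encard ∂μ := by
  have : IsProbabilityMeasure μ := hμ.1
  choose! a ha using fun y (hy : y ∈ outerVertexBoundary G A) => (mem_outerVertexBoundary.1 hy).2
  have hedge : ∀ y ∈ outerVertexBoundary G A, μ {ω | ω s(a y, y) = true} = p :=
    fun y hy => hμ.measure_edge_open (G.mem_edgeSet.2 (ha y hy).2)
  calc (#A : ℝ≥0∞) + p * #(outerVertexBoundary G A)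
      = ∫⁻ ω, ((#A : ℝ≥0∞) +
          ∑ y ∈ outerVertexBoundary G A, {η | η s(a y, y) = true}.indicator 1 ω) ∂μ := by
        rw [lintegral_add_left measurable_const, lintegral_const, measure_univ, mul_one,
          lintegral_finsetSum _ fun y _ => measurable_one.indicator (measurableSet_edge_open _)]
        simp_rw [lintegral_indicator_one (measurableSet_edge_open _)]
        rw [Finset.sum_congr rfl hedge, Finset.sum_const, nsmul_eq_mul, mul_comm]
    _ ≤ ∫⁻ ω, (⋃ x ∈ A, cluster G ω x).encard ∂μ :=
        lintegral_mono (card_add_sum_indicator_le_encard_biUnion_cluster A ha)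

lemma card_add_div_mul_card_innerVertexBoundary_le_lintegral [DecidableEq V] [G.LocallyFinite]
    {Δ : ℕ} (hΔ : ∀ x, G.degree x ≤ Δ) (hμ : IsBernoulli G p μ) (A : Finset V) :
    (#A : ℝ≥0∞) + p / Δ * #(innerVertexBoundary G A) ≤
      ∫⁻ ω, (⋃ x ∈ A, cluster G ω x).encard ∂μ := by
  refine le_trans (add_le_add le_rfl ?_) (card_add_mul_card_outerVertexBoundary_le_lintegral hμ A)
  calc p / Δ * #(innerVertexBoundary G A) ≤ p / Δ * (Δ * #(outerVertexBoundary G A)) := by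
        gcongr
        exact_mod_cast card_innerVertexBoundary_le hΔ A
    _ = Δ * (p / Δ) * #(outerVertexBoundary G A) := by ring
    _ ≤ p * #(outerVertexBoundary G A) := by
        gcongr
        exact ENNReal.mul_div_le

lemma lintegral_encard_biUnion_cluster_le [G.LocallyFinite] [IsProbabilityMeasure μ]
    (A : Finset V) :
    ∫⁻ ω, (⋃ x ∈ A, cluster G ω x).encard ∂μ ≤
      #A + (⨆ x, ∫⁻ ω, clusterSize G ω x ∂μ) * #(innerVertexBoundary G A) :=
  calc ∫⁻ ω, (⋃ x ∈ A, cluster G ω x).encard ∂μ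
      ≤ ∫⁻ ω, ((#A : ℝ≥0∞) + ∑ x ∈ innerVertexBoundary G A, clusterSize G ω x) ∂μ :=
        lintegral_mono fun ω => encard_biUnion_cluster_le A
    _ = #A + ∑ x ∈ innerVertexBoundary G A, ∫⁻ ω, clusterSize G ω x ∂μ := by
        rw [lintegral_add_left measurable_const, lintegral_const, measure_univ, mul_one,
          lintegral_finsetSum _ fun x _ => measurable_clusterSize x]
    _ ≤ #A + (⨆ x, ∫⁻ ω, clusterSize G ω x ∂μ) * #(innerVertexBoundary G A) := by
        rw [mul_comm, ← nsmul_eq_mul]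
        gcongr
        exact Finset.sum_le_card_nsmul _ _ _ fun x _ =>
          le_iSup (fun x => ∫⁻ ω, clusterSize G ω x ∂μ) x

end Expectation

section Walk

variable [DecidableEq V] {G : SimpleGraph V} {n : ℕ}

lemma iUnion_cluster_eq_biUnion_trace (ω : Sym2 V → Bool) (s : Fin (n + 1) → V) :
    ⋃ i, cluster G ω (s i) = ⋃ x ∈ trace s, cluster G ω x := by
  simp [trace]

lemma innerBoundary_eq (s : Fin (n + 1) → V) :
    innerBoundary G s = innerVertexBoundary G (trace s) := by
  ext x
  simp [innerBoundary, mem_innerVertexBoundary]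

lemma boundarySize_eq (s : Fin (n + 1) → V) :
    boundarySize G s = (innerVertexBoundary G (trace s)).card := by
  rw [boundarySize, innerBoundary_eq, Set.ncard_coe_finset]

lemma expRange_add_mul_expBoundary [G.LocallyFinite] (o : V) (c : ℝ≥0∞) :
    expRange G o n + c * expBoundary G o n =
      ∑' s : Fin (n + 1) → V, pathProb G o s * (rangeSize s + c * boundarySize G s) := by
  rw [expRange, expBoundary, ← ENNReal.tsum_mul_left, ← ENNReal.tsum_add]
  congr 1
  ext s
  ring

end Walk

theorem statement_8_general {V : Type*} [DecidableEq V] (G : SimpleGraph V) [G.LocallyFinite]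
    (Δ : ℕ) (hΔ : ∀ x : V, G.degree x ≤ Δ)
    (p : ℝ≥0∞)
    (μ : Measure (Sym2 V → Bool)) (hμ : IsBernoulli G p μ)
    (o : V) (n : ℕ) :
    (∀ (s : Fin (n + 1) → V) (ω : Sym2 V → Bool),
        (rangeSize s : ℝ≥0∞) ≤ ((⋃ i, cluster G ω (s i)).encard : ℝ≥0∞) ∧
        ((⋃ i, cluster G ω (s i)).encard : ℝ≥0∞) ≤
          (rangeSize s : ℝ≥0∞) + ∑' x : innerBoundary G s, clusterSize G ω (x : V)) ∧
      expRange G o n + p / Δ * expBoundary G o n ≤ expUnion G μ o n ∧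
      expUnion G μ o n ≤
        expRange G o n + (⨆ x : V, ∫⁻ ω, clusterSize G ω x ∂μ) * expBoundary G o n := by
  have : IsProbabilityMeasure μ := hμ.1
  simp only [expUnion, expRange_add_mul_expBoundary, iUnion_cluster_eq_biUnion_trace,
    boundarySize_eq]
  refine ⟨fun s ω => ⟨card_le_encard_biUnion_cluster _, ?_⟩,
    ENNReal.tsum_le_tsum fun s => mul_le_mul_right ?_ _,
    ENNReal.tsum_le_tsum fun s => mul_le_mul_right ?_ _⟩
  · rw [innerBoundary_eq, Finset.tsum_subtype']
    exact encard_biUnion_cluster_le _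
  · exact card_add_div_mul_card_innerVertexBoundary_le_lintegral hΔ hμ _
  · exact lintegral_encard_biUnion_cluster_le _

/-- deterministic sandwich `R_n ≤ U_n ≤ R_n + ∑_{x ∈ ∂R_n}|C_x|` and the
corresponding bounds in expectation. -/
theorem statement_8 {V : Type*} [DecidableEq V] (G : SimpleGraph V) [G.LocallyFinite]
    (hV : Infinite V) (hconn : G.Connected)
    (Δ : ℕ) (hΔ : ∀ x : V, G.degree x ≤ Δ) (hΔpos : 0 < Δ)
    (p : ℝ≥0∞) (hp : p ≤ 1)
    (μ : Measure (Sym2 V → Bool)) (hμ : IsBernoulli G p μ)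
    (hsup : (⨆ x : V, ∫⁻ ω, clusterSize G ω x ∂μ) < ⊤)
    (o : V) (n : ℕ) :
    (∀ (s : Fin (n + 1) → V) (ω : Sym2 V → Bool),
        (rangeSize s : ℝ≥0∞) ≤ ((⋃ i, cluster G ω (s i)).encard : ℝ≥0∞) ∧
        ((⋃ i, cluster G ω (s i)).encard : ℝ≥0∞) ≤
          (rangeSize s : ℝ≥0∞) + ∑' x : innerBoundary G s, clusterSize G ω (x : V)) ∧
      expRange G o n + p / Δ * expBoundary G o n ≤ expUnion G μ o n ∧
      expUnion G μ o n ≤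
        expRange G o n + (⨆ x : V, ∫⁻ ω, clusterSize G ω x ∂μ) * expBoundary G o n :=
  statement_8_general G Δ hΔ p μ hμ o n

end PaperUnion
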